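/- arXiv:1808.05200 — 8 statements merged into one kernel-verified Lean document; each statement's English description precedes it below -/
import Mathlib

section
/- Let P be a locally finite poset colored by a finite simple graph Γ satisfying EC. The color raising operators X_a on the free complex vector space on splits of P satisfy X_a² = 0 for all colors a if and only if P satisfies ND (no two neighbors in P have the same color). -/
open Finsupp

section ColoredPosets

open scoped Classical

variable {P : Type*} {Γ : Type*} [PartialOrder P]

/-- `x` is a minimal element of the subset `F`. -/
def MinIn (F : Set P) (x : P) : Prop := x ∈ F ∧ ∀ y ∈ F, y ≤ x → y = x

/-- `y` is a maximal element of the complement (the ideal) of `F`. -/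
def MaxInCompl (F : Set P) (y : P) : Prop := y ∉ F ∧ ∀ z, z ∉ F → y ≤ z → z = y

/-- A split of `P`, recorded by its filter part; the ideal is the complement. -/
abbrev Split (P : Type*) [PartialOrder P] := {F : Set P // IsUpperSet F}

theorem upper_erase {F : Set P} (hF : IsUpperSet F) {x : P} (hx : MinIn F x) :
    IsUpperSet (F \ {x}) := by
  intro u v huv hu
  refine ⟨hF huv hu.1, fun hv => ?_⟩
  rw [Set.mem_singleton_iff] at hv
  subst hv
  exact hu.2 (Set.mem_singleton_iff.mpr (hx.2 u hu.1 huv))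

theorem upper_insert {F : Set P} (hF : IsUpperSet F) {y : P} (hy : MaxInCompl F y) :
    IsUpperSet (insert y F) := by
  intro u v huv hu
  rcases hu with rfl | hu
  · by_cases hvF : v ∈ F
    · exact Set.mem_insert_of_mem _ hvF
    · rw [hy.2 v hvF huv]; exact Set.mem_insert _ _
  · exact Set.mem_insert_of_mem _ (hF huv hu)

/-- The image of the basis vector `⟨F,I⟩` under the color raising operator `X_a`:
the sum of `⟨F-x, I+x⟩` over all minimal elements `x` of `F` of color `a`. -/
noncomputable def XF (κ : P → Γ) (a : Γ) (F : Split P) : Split P →₀ ℂ :=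
  ∑ᶠ x : P, if h : MinIn F.1 x ∧ κ x = a then
    Finsupp.single ⟨F.1 \ {x}, upper_erase F.2 h.1⟩ 1 else 0

/-- The color raising operator `X_a` on the free complex vector space on splits. -/
noncomputable def Xop (κ : P → Γ) (a : Γ) : Module.End ℂ (Split P →₀ ℂ) :=
  Finsupp.linearCombination ℂ (XF κ a)

/-- The image of the basis vector `⟨F,I⟩` under the color lowering operator `Y_a`:
the sum of `⟨F+y, I-y⟩` over all maximal elements `y` of `I` of color `a`. -/
noncomputable def YF (κ : P → Γ) (a : Γ) (F : Split P) : Split P →₀ ℂ :=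
  ∑ᶠ y : P, if h : MaxInCompl F.1 y ∧ κ y = a then
    Finsupp.single ⟨insert y F.1, upper_insert F.2 h.1⟩ 1 else 0

/-- The color lowering operator `Y_a`. -/
noncomputable def Yop (κ : P → Γ) (a : Γ) : Module.End ℂ (Split P →₀ ℂ) :=
  Finsupp.linearCombination ℂ (YF κ a)

/-- The diagonal operator with eigenvalue function `η a`. -/
noncomputable def Hop (η : Γ → Split P → ℂ) (a : Γ) : Module.End ℂ (Split P →₀ ℂ) :=
  Finsupp.linearCombination ℂ (fun F => η a F • Finsupp.single F (1 : ℂ))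

/-- The generalized Cartan matrix entries of the simple graph `Γ`. -/
noncomputable def theta (G : SimpleGraph Γ) (a b : Γ) : ℤ :=
  if a = b then 2 else if G.Adj a b then -1 else 0

/-- `Δ_b[(F',I'),(F,I)] = |P_b ∩ (I'−I)| − |P_b ∩ (I−I')|`. -/
noncomputable def Delta (κ : P → Γ) (b : Γ) (F' F : Split P) : ℤ :=
  (Nat.card {x : P // κ x = b ∧ x ∈ F.1 ∧ x ∉ F'.1} : ℤ)
    - (Nat.card {x : P // κ x = b ∧ x ∈ F'.1 ∧ x ∉ F.1} : ℤ)

/-- One covering step upward in the Hasse diagram of `FI(P)`: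
a minimal element of the filter is transferred to the ideal. -/
def SplitStep (F G : Split P) : Prop := ∃ x, MinIn F.1 x ∧ G.1 = F.1 \ {x}

/-- Two splits are in the same component when joined by a finite path in the
Hasse diagram of `FI(P)`, edges traversed in either direction. -/
def SameComponent (F G : Split P) : Prop :=
  Relation.ReflTransGen (fun A B => SplitStep A B ∨ SplitStep B A) F G

/-- Sum over the colors adjacent to `b` in `Γ`. -/
noncomputable def adjSum [Fintype Γ] (G : SimpleGraph Γ) (b : Γ) (f : Γ → ℤ) : ℤ :=
  ∑ c ∈ Finset.univ.filter (fun c => G.Adj c b), f c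

/-- An edge weight function on `FI(P)`. -/
def IsEdgeWeight (G : SimpleGraph Γ) (κ : P → Γ) (η : Γ → Split P → ℂ) : Prop :=
  ∀ (b : Γ) (F : Split P) (x : P) (hx : MinIn F.1 x),
    η b ⟨F.1 \ {x}, upper_erase F.2 hx⟩ - η b F = ((theta G (κ x) b : ℤ) : ℂ)

/-- A component weight function on `FI(P)`. -/
def IsComponentWeight [Fintype Γ] (G : SimpleGraph Γ) (κ : P → Γ)
    (η : Γ → Split P → ℂ) : Prop :=
  ∀ (b : Γ) (F F' : Split P), SameComponent F F' →
    η b F' - η b F =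
      ((2 * Delta κ b F' F - adjSum G b (fun c => Delta κ c F' F) : ℤ) : ℂ)


lemma minIn_unique {κ : P → Γ} (hEC : ∀ x y : P, κ x = κ y → x ≤ y ∨ y ≤ x)
    {F : Set P} {a : Γ} {x y : P} (hx : MinIn F x ∧ κ x = a) (hy : MinIn F y ∧ κ y = a) :
    x = y := by
  rcases hEC x y (hx.2.trans hy.2.symm) with h | h
  · exact hy.1.2 x hx.1.1 h
  · exact (hx.1.2 y hy.1.1 h).symm

lemma XF_single {κ : P → Γ} (hEC : ∀ x y : P, κ x = κ y → x ≤ y ∨ y ≤ x)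
    {a : Γ} {F : Split P} {x : P} (h : MinIn F.1 x ∧ κ x = a) :
    XF κ a F = Finsupp.single ⟨F.1 \ {x}, upper_erase F.2 h.1⟩ 1 := by
  unfold XF
  rw [finsum_eq_single _ x, dif_pos h]
  intro x' hx'
  rw [dif_neg]
  exact fun h' => hx' (minIn_unique hEC h' h)

lemma XF_zero {κ : P → Γ} {a : Γ} {F : Split P}
    (h : ∀ x, ¬(MinIn F.1 x ∧ κ x = a)) : XF κ a F = 0 := by
  unfold XF
  apply finsum_eq_zero_of_forall_eq_zero
  intro x
  rw [dif_neg (h x)]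

lemma Xop_single {κ : P → Γ} {a : Γ} (F : Split P) :
    Xop κ a (Finsupp.single F 1) = XF κ a F := by
  simp [Xop]

lemma covby_of_double_min {κ : P → Γ} (hEC : ∀ x y : P, κ x = κ y → x ≤ y ∨ y ≤ x)
    {a : Γ} {F : Split P} {x x' : P} (hx : MinIn F.1 x ∧ κ x = a)
    (hx' : MinIn (F.1 \ {x}) x' ∧ κ x' = a) : x ⋖ x' := by
  have hne : x' ≠ x := hx'.1.1.2
  have hlt : x < x' := by
    rcases hEC x x' (hx.2.trans hx'.2.symm) with h | h
    · exact lt_of_le_of_ne h hne.symm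
    · exact absurd (hx.1.2 x' hx'.1.1.1 h) hne
  refine ⟨hlt, fun z hz hz' => ?_⟩
  have hzF : z ∈ F.1 \ {x} := ⟨F.2 hz.le hx.1.1, fun hzx => absurd hzx.symm hz.ne⟩
  exact absurd (hx'.1.2 z hzF hz'.le) hz'.ne

/-- Under EC, `X_a² = 0` for all colors `a` iff ND holds. -/
theorem stmt1 [LocallyFiniteOrder P] [Fintype Γ] (G : SimpleGraph Γ)
    (κ : P → Γ) (hsurj : Function.Surjective κ)
    (hEC : ∀ x y : P, κ x = κ y → x ≤ y ∨ y ≤ x) :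
    (∀ a : Γ, Xop κ a * Xop κ a = 0) ↔ (∀ x y : P, x ⋖ y → κ x ≠ κ y) := by
  constructor
  · intro hsq x y hxy hcol
    set a := κ x with ha
    set F0 : Split P := ⟨{z | x ≤ z}, fun u v huv hu => le_trans hu huv⟩ with hF0
    have hminx : MinIn F0.1 x ∧ κ x = a := ⟨⟨le_refl x, fun z hz hzx => le_antisymm hzx hz⟩, rfl⟩
    set F1 : Split P := ⟨F0.1 \ {x}, upper_erase F0.2 hminx.1⟩ with hF1
    have hminy : MinIn F1.1 y ∧ κ y = a := by
      refine ⟨⟨⟨hxy.lt.le, fun h => hxy.lt.ne' h⟩, fun z hz hzy => ?_⟩, hcol.symm⟩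
      by_contra hne
      have hxz : x < z := lt_of_le_of_ne hz.1 (fun h => hz.2 h.symm)
      exact hxy.2 hxz (lt_of_le_of_ne hzy hne)
    have h0 : (Xop κ a * Xop κ a) (Finsupp.single F0 1) = 0 := by rw [hsq a]; rfl
    rw [Module.End.mul_apply, Xop_single, XF_single hEC hminx] at h0
    rw [Xop_single, XF_single hEC hminy] at h0
    exact one_ne_zero (Finsupp.single_eq_zero.mp h0)
  · intro hND a
    refine Finsupp.lhom_ext fun F c => ?_
    have hFc : (Finsupp.single F c : Split P →₀ ℂ) = c • Finsupp.single F 1 := by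
      rw [Finsupp.smul_single, smul_eq_mul, mul_one]
    rw [Module.End.mul_apply, hFc, map_smul, map_smul, LinearMap.zero_apply, Xop_single]
    by_cases hx : ∃ x, MinIn F.1 x ∧ κ x = a
    · obtain ⟨x, hx⟩ := hx
      rw [XF_single hEC hx, Xop_single]
      have hz : XF κ a ⟨F.1 \ {x}, upper_erase F.2 hx.1⟩ = 0 := by
        apply XF_zero
        intro x' hx'
        exact hND x x' (covby_of_double_min hEC hx hx') (hx.2.trans hx'.2.symm)
      rw [hz, smul_zero]
    · push_neg at hx
      rw [XF_zero fun x h => hx x h.1 h.2, map_zero, smul_zero]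


end ColoredPosets
end

section
/- Let P be a locally finite poset colored by a finite simple graph Γ. A Γ-indexed family {η_a} of complex-valued functions on FI(P) is an edge weight function (i.e., η_b(F−x,I+x) − η_b(F,I) = θ_{κ(x),b} for every color b, split (F,I), and minimal element x of F) if and only if it is a component weight function (i.e., η_b(F',I') − η_b(F,I) = 2Δ_b[(F',I'),(F,I)] − Σ_{c ∼ b} Δ_c[(F',I'),(F,I)] whenever (F,I) and (F',I') are in the same component of FI(P)). -/
open Finsupp

section ColoredPosets

open scoped Classical

variable {P : Type*} {Γ : Type*} [PartialOrder P]

lemma card_eq_ncard (p : P → Prop) :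
    Nat.card {x : P // p x} = Set.ncard {x | p x} :=
  Nat.card_coe_set_eq {x | p x}

lemma delta_refl (κ : P → Γ) (b : Γ) (F : Split P) : Delta κ b F F = 0 := by
  unfold Delta
  ring

lemma delta_step (κ : P → Γ) (b : Γ) (F F' F'' : Split P) (x : P)
    (hxF' : x ∈ F'.1) (hF'' : F''.1 = F'.1 \ {x})
    (hfin1 : (F.1 \ F'.1).Finite) (hfin2 : (F'.1 \ F.1).Finite) :
    Delta κ b F'' F = Delta κ b F' F + (if κ x = b then 1 else 0) := by
  have hxF'' : x ∉ F''.1 := by rw [hF'']; simp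
  unfold Delta
  rw [card_eq_ncard, card_eq_ncard, card_eq_ncard, card_eq_ncard]
  by_cases hb : κ x = b
  · by_cases hxF : x ∈ F.1
    · have e1 : {y | κ y = b ∧ y ∈ F.1 ∧ y ∉ F''.1}
          = insert x {y | κ y = b ∧ y ∈ F.1 ∧ y ∉ F'.1} := by
        ext y
        by_cases hyx : y = x
        · subst hyx; simp [hb, hxF, hxF'']
        · simp only [Set.mem_setOf_eq, Set.mem_insert_iff, hF'', Set.mem_diff,
            Set.mem_singleton_iff, hyx, false_or]
          tauto
      have e2 : {y | κ y = b ∧ y ∈ F''.1 ∧ y ∉ F.1}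
          = {y | κ y = b ∧ y ∈ F'.1 ∧ y ∉ F.1} := by
        ext y
        by_cases hyx : y = x
        · subst hyx; simp [hxF, hxF'']
        · simp only [Set.mem_setOf_eq, hF'', Set.mem_diff, Set.mem_singleton_iff, hyx]
          tauto
      rw [e1, e2, Set.ncard_insert_of_notMem (by simp [hxF'])
        (Set.Finite.subset hfin1 (fun y hy => ⟨hy.2.1, hy.2.2⟩))]
      simp [hb]; push_cast; ring
    · have e1 : {y | κ y = b ∧ y ∈ F.1 ∧ y ∉ F''.1}
          = {y | κ y = b ∧ y ∈ F.1 ∧ y ∉ F'.1} := by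
        ext y
        by_cases hyx : y = x
        · subst hyx; simp [hxF]
        · simp only [Set.mem_setOf_eq, hF'', Set.mem_diff, Set.mem_singleton_iff, hyx]
          tauto
      have e2 : {y | κ y = b ∧ y ∈ F'.1 ∧ y ∉ F.1}
          = insert x {y | κ y = b ∧ y ∈ F''.1 ∧ y ∉ F.1} := by
        ext y
        by_cases hyx : y = x
        · subst hyx; simp [hb, hxF, hxF']
        · simp only [Set.mem_setOf_eq, Set.mem_insert_iff, hF'', Set.mem_diff,
            Set.mem_singleton_iff, hyx, false_or]
          tauto
      rw [e1, e2, Set.ncard_insert_of_notMem (by simp [hxF''])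
        (Set.Finite.subset hfin2 (fun y hy => ⟨(hF'' ▸ hy.2.1).1, hy.2.2⟩))]
      simp [hb]; push_cast; ring
  · have e1 : {y | κ y = b ∧ y ∈ F.1 ∧ y ∉ F''.1}
        = {y | κ y = b ∧ y ∈ F.1 ∧ y ∉ F'.1} := by
      ext y
      by_cases hyx : y = x
      · subst hyx; simp [hb]
      · simp only [Set.mem_setOf_eq, hF'', Set.mem_diff, Set.mem_singleton_iff, hyx]
        tauto
    have e2 : {y | κ y = b ∧ y ∈ F''.1 ∧ y ∉ F.1}
        = {y | κ y = b ∧ y ∈ F'.1 ∧ y ∉ F.1} := by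
      ext y
      by_cases hyx : y = x
      · subst hyx; simp [hb]
      · simp only [Set.mem_setOf_eq, hF'', Set.mem_diff, Set.mem_singleton_iff, hyx]
        tauto
    rw [e1, e2]
    simp [hb]

lemma sameComponent_finite {F F' : Split P} (h : SameComponent F F') :
    (F.1 \ F'.1).Finite ∧ (F'.1 \ F.1).Finite := by
  induction h with
  | refl => simp
  | tail hFB hBC ih =>
    rename_i B C
    have hd1 : ∀ (A : Set P) (x : P), (A \ (A \ {x})).Finite := by
      intro A x
      refine (Set.finite_singleton x).subset ?_
      intro y hy
      simp only [Set.mem_diff, Set.mem_singleton_iff, not_and, not_not] at hy ⊢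
      exact hy.2 hy.1
    have hd2 : ∀ (A : Set P) (x : P), ((A \ {x}) \ A).Finite := by
      intro A x
      exact Set.finite_empty.subset (fun y hy => (hy.2 hy.1.1).elim)
    have hstep : (B.1 \ C.1).Finite ∧ (C.1 \ B.1).Finite := by
      rcases hBC with ⟨x, hx, hC⟩ | ⟨x, hx, hB⟩
      · rw [hC]; exact ⟨hd1 B.1 x, hd2 B.1 x⟩
      · rw [hB]; exact ⟨hd2 C.1 x, hd1 C.1 x⟩
    constructor
    · refine (ih.1.union hstep.1).subset ?_
      intro y hy
      by_cases hyB : y ∈ B.1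
      · exact Or.inr ⟨hyB, hy.2⟩
      · exact Or.inl ⟨hy.1, hyB⟩
    · refine (hstep.2.union ih.2).subset ?_
      intro y hy
      by_cases hyB : y ∈ B.1
      · exact Or.inr ⟨hyB, hy.2⟩
      · exact Or.inl ⟨hy.1, hyB⟩

lemma theta_formula [Fintype Γ] (G : SimpleGraph Γ) (a b : Γ) :
    theta G a b = 2 * (if a = b then 1 else 0)
      - adjSum G b (fun c => if a = c then 1 else 0) := by
  have hs : adjSum G b (fun c => if a = c then (1:ℤ) else 0)
      = if G.Adj a b then 1 else 0 := by
    unfold adjSum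
    rw [Finset.sum_ite_eq]
    simp [Finset.mem_filter]
  rw [hs]
  unfold theta
  by_cases hab : a = b
  · subst hab; simp [G.irrefl]
  · simp only [hab, if_false]
    split_ifs <;> ring

lemma key_arith [Fintype Γ] (G : SimpleGraph Γ) (b a : Γ) (D D' : Γ → ℤ)
    (h : ∀ c, D' c = D c + (if a = c then 1 else 0)) :
    2 * D' b - adjSum G b D' = (2 * D b - adjSum G b D) + theta G a b := by
  rw [theta_formula]
  unfold adjSum
  have hsum : ∑ c ∈ Finset.univ.filter (fun c => G.Adj c b), D' c
      = ∑ c ∈ Finset.univ.filter (fun c => G.Adj c b), (D c + (if a = c then 1 else 0)) :=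
    Finset.sum_congr rfl (fun c _ => h c)
  rw [hsum, Finset.sum_add_distrib, h b]
  ring

/-- A weight function is an edge weight function iff it is a
component weight function. -/
theorem stmt7 [LocallyFiniteOrder P] [Fintype Γ] (G : SimpleGraph Γ)
    (κ : P → Γ) (hsurj : Function.Surjective κ) (η : Γ → Split P → ℂ) :
    IsEdgeWeight G κ η ↔ IsComponentWeight G κ η := by
  constructor
  · intro hE b F F' hcomp
    induction hcomp with
    | refl =>
      have h0 : ∀ c, Delta κ c F F = 0 := fun c => delta_refl κ c F
      simp only [h0]
      have : adjSum G b (fun _ : Γ => (0 : ℤ)) = 0 := by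
        unfold adjSum; simp
      rw [this]
      simp
    | tail hFB hBC ih =>
      rename_i B C
      obtain ⟨hfin1, hfin2⟩ := sameComponent_finite hFB
      rcases hBC with ⟨x, hx, hC⟩ | ⟨x, hx, hB⟩
      · -- C = B \ {x}
        have hCeq : C = ⟨B.1 \ {x}, upper_erase B.2 hx⟩ := Subtype.ext hC
        have hstep : η b C - η b B = ((theta G (κ x) b : ℤ) : ℂ) := by
          rw [hCeq]; exact hE b B x hx
        have hD : ∀ c, Delta κ c C F = Delta κ c B F + (if κ x = c then 1 else 0) :=
          fun c => delta_step κ c F B C x hx.1 hC hfin1 hfin2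
        have hkey : 2 * Delta κ b C F - adjSum G b (fun c => Delta κ c C F)
            = (2 * Delta κ b B F - adjSum G b (fun c => Delta κ c B F)) + theta G (κ x) b :=
          key_arith G b (κ x) _ _ hD
        have : η b C - η b F = (η b B - η b F) + (η b C - η b B) := by ring
        rw [this, ih, hstep, hkey]
        push_cast
        ring
      · -- B = C \ {x}
        have hxC : x ∈ C.1 := hx.1
        have hBeq : B = ⟨C.1 \ {x}, upper_erase C.2 hx⟩ := Subtype.ext hB
        have hstep : η b B - η b C = ((theta G (κ x) b : ℤ) : ℂ) := by
          rw [hBeq]; exact hE b C x hx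
        have hD : ∀ c, Delta κ c B F = Delta κ c C F + (if κ x = c then 1 else 0) :=
          fun c => delta_step κ c F C B x hx.1 hB
            (hfin1.subset (fun y hy => ⟨hy.1, fun hyB => hy.2 ((hB ▸ hyB : y ∈ C.1 \ {x}).1)⟩))
            ((hfin2.union (Set.finite_singleton x)).subset (fun y hy => by
              by_cases hyx : y = x
              · exact Or.inr hyx
              · exact Or.inl ⟨by rw [hB]; exact ⟨hy.1, hyx⟩, hy.2⟩))
        have hkey : 2 * Delta κ b B F - adjSum G b (fun c => Delta κ c B F)
            = (2 * Delta κ b C F - adjSum G b (fun c => Delta κ c C F)) + theta G (κ x) b :=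
          key_arith G b (κ x) _ _ hD
        have hkey' : 2 * Delta κ b C F - adjSum G b (fun c => Delta κ c C F)
            = (2 * Delta κ b B F - adjSum G b (fun c => Delta κ c B F)) - theta G (κ x) b := by
          omega
        have : η b C - η b F = (η b B - η b F) - (η b B - η b C) := by ring
        rw [this, ih, hstep, hkey']
        push_cast
        ring
  · intro hC b F x hx
    have hcomp : SameComponent F ⟨F.1 \ {x}, upper_erase F.2 hx⟩ :=
      Relation.ReflTransGen.single (Or.inl ⟨x, hx, rfl⟩)
    have hD : ∀ c, Delta κ c (⟨F.1 \ {x}, upper_erase F.2 hx⟩ : Split P) F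
        = (if κ x = c then 1 else 0) := by
      intro c
      have := delta_step κ c F F ⟨F.1 \ {x}, upper_erase F.2 hx⟩ x hx.1 rfl
        (by simp) (by simp)
      rw [delta_refl] at this
      omega
    have hkey := key_arith G b (κ x) (fun _ => 0)
      (fun c => Delta κ c (⟨F.1 \ {x}, upper_erase F.2 hx⟩ : Split P) F)
      (fun c => (hD c).trans (zero_add _).symm)
    have hz : adjSum G b (fun _ : Γ => (0 : ℤ)) = 0 := by unfold adjSum; simp
    rw [hz] at hkey
    rw [hC b F ⟨F.1 \ {x}, upper_erase F.2 hx⟩ hcomp, hkey]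
    push_cast
    ring


end ColoredPosets
end

section
/- If a locally finite poset P colored by a finite simple graph Γ satisfies I2A (for every color a, the open interval between any two consecutive elements of color a contains exactly two elements with colors adjacent to a), then P satisfies both ND (neighbors have different colors) and I3ND (in any three-element interval x → y → z consisting of two covering relations, x and z have different colors). -/
open Finsupp

section ColoredPosets

open scoped Classical

variable {P : Type*} {Γ : Type*} [PartialOrder P]

/-- I2A implies ND and I3ND. -/
theorem stmt10 [LocallyFiniteOrder P] [Fintype Γ] (G : SimpleGraph Γ)
    (κ : P → Γ) (hsurj : Function.Surjective κ)
    (hI2A : ∀ x y : P, κ x = κ y → x < y → (∀ z ∈ Set.Ioo x y, κ z ≠ κ x) →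
      Nat.card {z : P // z ∈ Set.Ioo x y ∧ G.Adj (κ z) (κ x)} = 2) :
    (∀ x y : P, x ⋖ y → κ x ≠ κ y) ∧
      (∀ x y z : P, x ⋖ y → y ⋖ z → Set.Icc x z = {x, y, z} → κ x ≠ κ z) := by
  have hND : ∀ x y : P, x ⋖ y → κ x ≠ κ y := by
    intro x y hxy hk
    have h2 := hI2A x y hk hxy.1 (by
      intro z hz
      exact absurd hz (by rw [hxy.Ioo_eq]; exact Set.notMem_empty z))
    have : IsEmpty {z : P // z ∈ Set.Ioo x y ∧ G.Adj (κ z) (κ x)} := by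
      constructor
      rintro ⟨z, hz, -⟩
      rw [hxy.Ioo_eq] at hz
      exact hz
    rw [Nat.card_of_isEmpty] at h2
    exact two_ne_zero h2.symm
  refine ⟨hND, ?_⟩
  intro x y z hxy hyz hIcc hk
  have hxz : x < z := hxy.1.trans hyz.1
  have hyIoo : ∀ w : P, w ∈ Set.Ioo x z ↔ w = y := by
    intro w
    constructor
    · rintro ⟨hw1, hw2⟩
      have : w ∈ Set.Icc x z := ⟨hw1.le, hw2.le⟩
      rw [hIcc] at this
      rcases this with rfl | rfl | rfl
      · exact absurd rfl hw1.ne'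
      · rfl
      · exact absurd rfl hw2.ne'
    · rintro rfl
      exact ⟨hxy.1, hyz.1⟩
  have h2 := hI2A x z hk hxz (by
    intro w hw
    rw [hyIoo] at hw
    subst hw
    exact fun h => hND x w hxy h.symm)
  rw [Nat.card_eq_two_iff] at h2
  obtain ⟨u, v, hne, -⟩ := h2
  have hu := (hyIoo u.1).mp u.2.1
  have hv := (hyIoo v.1).mp v.2.1
  exact hne (Subtype.ext (hu.trans hv.symm))


end ColoredPosets
end

section
/- Let P be a locally finite poset colored by a finite simple graph Γ satisfying EC (same-colored elements comparable). Then for distinct colors a ≠ b, the operators satisfy the commutation relation [X_b, Y_a] = 0 on the free vector space on splits of P. -/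
open Finsupp

section ColoredPosets

open scoped Classical

variable {P : Type*} {Γ : Type*} [PartialOrder P]

/- ### Auxiliary lemmas for stmt11 -/

theorem min_unique {κ : P → Γ} (hEC : ∀ x y : P, κ x = κ y → x ≤ y ∨ y ≤ x)
    {F : Set P} {x x' : P} (hx : MinIn F x) (hx' : MinIn F x')
    (hc : κ x = κ x') : x = x' := by
  rcases hEC x x' hc with h | h
  · exact hx'.2 x hx.1 h
  · exact (hx.2 x' hx'.1 h).symm

theorem max_unique {κ : P → Γ} (hEC : ∀ x y : P, κ x = κ y → x ≤ y ∨ y ≤ x)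
    {F : Set P} {y y' : P} (hy : MaxInCompl F y) (hy' : MaxInCompl F y')
    (hc : κ y = κ y') : y = y' := by
  rcases hEC y y' hc with h | h
  · exact (hy.2 y' hy'.1 h).symm
  · exact hy'.2 y hy.1 h

theorem minIn_insert {F : Set P} {x y : P} (hxy : x ≠ y) :
    MinIn (insert y F) x ↔ MinIn F x ∧ ¬ y ≤ x := by
  constructor
  · rintro ⟨hxF, hmin⟩
    rcases hxF with rfl | hxF
    · exact absurd rfl hxy
    refine ⟨⟨hxF, fun u hu hux => hmin u (Set.mem_insert_of_mem _ hu) hux⟩,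
      fun hyx => hxy (hmin y (Set.mem_insert _ _) hyx).symm⟩
  · rintro ⟨⟨hxF, hmin⟩, hyx⟩
    refine ⟨Set.mem_insert_of_mem _ hxF, fun u hu hux => ?_⟩
    rcases hu with rfl | hu
    · exact absurd hux hyx
    · exact hmin u hu hux

theorem maxInCompl_diff {F : Set P} {x y : P} (hx : MinIn F x) (hxy : x ≠ y) :
    MaxInCompl (F \ {x}) y ↔ MaxInCompl F y ∧ ¬ y ≤ x := by
  constructor
  · rintro ⟨hyF, hmax⟩
    have hyF' : y ∉ F := fun hy =>
      hyF ⟨hy, fun h => hxy (Set.mem_singleton_iff.mp h).symm⟩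
    refine ⟨⟨hyF', fun z hz hyz => hmax z (fun hz' => hz hz'.1) hyz⟩, fun hyx => ?_⟩
    exact hxy (hmax x (fun h => h.2 rfl) hyx)
  · rintro ⟨⟨hyF, hmax⟩, hyx⟩
    refine ⟨fun h => hyF h.1, fun z hz hyz => ?_⟩
    by_cases hzx : z = x
    · subst hzx; exact absurd hyz hyx
    · exact hmax z (fun hzF => hz ⟨hzF, hzx⟩) hyz

theorem XF_eq_single {κ : P → Γ} (hEC : ∀ x y : P, κ x = κ y → x ≤ y ∨ y ≤ x)
    {b : Γ} {F : Split P} {x : P} (hx : MinIn F.1 x) (hb : κ x = b) :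
    XF κ b F = Finsupp.single ⟨F.1 \ {x}, upper_erase F.2 hx⟩ 1 := by
  unfold XF
  rw [finsum_eq_single _ x, dif_pos ⟨hx, hb⟩]
  intro x' hx'
  rw [dif_neg]
  rintro ⟨h1, h2⟩
  exact hx' (min_unique hEC h1 hx (by rw [h2, hb]))

theorem XF_eq_zero {κ : P → Γ} {b : Γ} {F : Split P}
    (h : ¬ ∃ x, MinIn F.1 x ∧ κ x = b) : XF κ b F = 0 := by
  unfold XF
  exact finsum_eq_zero_of_forall_eq_zero fun x => dif_neg fun hx => h ⟨x, hx⟩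

theorem YF_eq_single {κ : P → Γ} (hEC : ∀ x y : P, κ x = κ y → x ≤ y ∨ y ≤ x)
    {a : Γ} {F : Split P} {y : P} (hy : MaxInCompl F.1 y) (ha : κ y = a) :
    YF κ a F = Finsupp.single ⟨insert y F.1, upper_insert F.2 hy⟩ 1 := by
  unfold YF
  rw [finsum_eq_single _ y, dif_pos ⟨hy, ha⟩]
  intro y' hy'
  rw [dif_neg]
  rintro ⟨h1, h2⟩
  exact hy' (max_unique hEC h1 hy (by rw [h2, ha]))

theorem YF_eq_zero {κ : P → Γ} {a : Γ} {F : Split P}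
    (h : ¬ ∃ y, MaxInCompl F.1 y ∧ κ y = a) : YF κ a F = 0 := by
  unfold YF
  exact finsum_eq_zero_of_forall_eq_zero fun y => dif_neg fun hy => h ⟨y, hy⟩

/-- Under EC, `[X_b, Y_a] = 0` for distinct colors `a ≠ b`. -/
theorem stmt11 [LocallyFiniteOrder P] [Fintype Γ] (G : SimpleGraph Γ)
    (κ : P → Γ) (hsurj : Function.Surjective κ)
    (hEC : ∀ x y : P, κ x = κ y → x ≤ y ∨ y ≤ x) :
    ∀ a b : Γ, a ≠ b → Xop κ b * Yop κ a - Yop κ a * Xop κ b = 0 := by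
  intro a b hab
  have hXs : ∀ G : Split P, Xop κ b (Finsupp.single G 1) = XF κ b G := by
    intro G; simp [Xop, Finsupp.linearCombination_single]
  have hYs : ∀ G : Split P, Yop κ a (Finsupp.single G 1) = YF κ a G := by
    intro G; simp [Yop, Finsupp.linearCombination_single]
  have key : ∀ F : Split P, Xop κ b (YF κ a F) = Yop κ a (XF κ b F) := by
    intro F
    by_cases hy : ∃ y, MaxInCompl F.1 y ∧ κ y = a
    · obtain ⟨y, hyM, hya⟩ := hy
      rw [YF_eq_single hEC hyM hya, hXs]
      by_cases hx : ∃ x, MinIn F.1 x ∧ κ x = b ∧ ¬ y ≤ x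
      · obtain ⟨x, hxM, hxb, hyx⟩ := hx
        have hxy : x ≠ y := fun h => hab (by rw [← hya, ← h, hxb])
        have hxM' : MinIn (insert y F.1) x := (minIn_insert hxy).mpr ⟨hxM, hyx⟩
        rw [XF_eq_single hEC (F := ⟨insert y F.1, upper_insert F.2 hyM⟩) hxM' hxb,
          XF_eq_single hEC hxM hxb, hYs,
          YF_eq_single hEC (F := ⟨F.1 \ {x}, upper_erase F.2 hxM⟩)
            ((maxInCompl_diff hxM hxy).mpr ⟨hyM, hyx⟩) hya]
        congr 1
        exact Subtype.ext (Set.insert_diff_singleton_comm hxy.symm F.1).symm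
      · rw [XF_eq_zero (F := ⟨insert y F.1, upper_insert F.2 hyM⟩)]
        · by_cases hx2 : ∃ x, MinIn F.1 x ∧ κ x = b
          · obtain ⟨x, hxM, hxb⟩ := hx2
            have hxy : x ≠ y := fun h => hab (by rw [← hya, ← h, hxb])
            have hylex : y ≤ x := by
              by_contra hc; exact hx ⟨x, hxM, hxb, hc⟩
            rw [XF_eq_single hEC hxM hxb, hYs,
              YF_eq_zero (F := ⟨F.1 \ {x}, upper_erase F.2 hxM⟩)]
            rintro ⟨y', hy'M, hy'a⟩
            obtain ⟨hy'F, hy'x⟩ := (maxInCompl_diff hxM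
              (fun h => hab (by rw [← hy'a, ← h, hxb]))).mp hy'M
            exact hy'x (max_unique hEC hy'F hyM (by rw [hy'a, hya]) ▸ hylex)
          · rw [XF_eq_zero hx2, map_zero]
        · rintro ⟨x', hx'M, hx'b⟩
          have hxy : x' ≠ y := fun h => hab (by rw [← hya, ← h, hx'b])
          obtain ⟨h1, h2⟩ := (minIn_insert hxy).mp hx'M
          exact hx ⟨x', h1, hx'b, h2⟩
    · rw [YF_eq_zero hy, map_zero]
      by_cases hx : ∃ x, MinIn F.1 x ∧ κ x = b
      · obtain ⟨x, hxM, hxb⟩ := hx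
        rw [XF_eq_single hEC hxM hxb, hYs,
          YF_eq_zero (F := ⟨F.1 \ {x}, upper_erase F.2 hxM⟩)]
        rintro ⟨y', hy'M, hy'a⟩
        obtain ⟨h1, _⟩ := (maxInCompl_diff hxM
          (fun h => hab (by rw [← hy'a, ← h, hxb]))).mp hy'M
        exact hy ⟨y', h1, hy'a⟩
      · rw [XF_eq_zero hx, map_zero]
  have heq : Xop κ b * Yop κ a = Yop κ a * Xop κ b := by
    refine Finsupp.lhom_ext fun F c => ?_
    have h1 : (Finsupp.single F c : Split P →₀ ℂ) = c • Finsupp.single F 1 := by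
      simp [Finsupp.smul_single]
    rw [Module.End.mul_apply, Module.End.mul_apply, h1, map_smul, map_smul, map_smul,
      map_smul, hXs, hYs, key]
  rw [heq]; exact sub_self (Yop κ a * Xop κ b)


end ColoredPosets
end

section
/- Let P be a locally finite poset colored by a finite simple graph Γ satisfying EC, AC (elements with adjacent colors are comparable), and I2A. Suppose {η_a} is an edge weight function such that for every color b and split (F,I), η_b(F,I) = +1 whenever b is the color of a maximal element of I. Then also η_b(F,I) = −1 whenever b is the color of a minimal element of F. -/
open Finsupp

section ColoredPosets

open scoped Classical

variable {P : Type*} {Γ : Type*} [PartialOrder P]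

/-- Under EC, AC and I2A, an edge weight function taking the value
`+1` at colors of maximal elements of ideals takes the value `-1` at colors of
minimal elements of filters. -/
theorem stmt13 [LocallyFiniteOrder P] [Fintype Γ] (G : SimpleGraph Γ)
    (κ : P → Γ) (hsurj : Function.Surjective κ)
    (hEC : ∀ x y : P, κ x = κ y → x ≤ y ∨ y ≤ x)
    (hAC : ∀ x y : P, G.Adj (κ x) (κ y) → x ≤ y ∨ y ≤ x)
    (hI2A : ∀ x y : P, κ x = κ y → x < y → (∀ z ∈ Set.Ioo x y, κ z ≠ κ x) →
      Nat.card {z : P // z ∈ Set.Ioo x y ∧ G.Adj (κ z) (κ x)} = 2)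
    (η : Γ → Split P → ℂ) (hη : IsEdgeWeight G κ η)
    (hmax : ∀ (b : Γ) (F : Split P),
      (∃ y : P, MaxInCompl F.1 y ∧ κ y = b) → η b F = 1) :
    ∀ (b : Γ) (F : Split P), (∃ x : P, MinIn F.1 x ∧ κ x = b) → η b F = -1 := by
  intro b F ⟨x, hx, hκ⟩
  have hmaxc : MaxInCompl (F.1 \ {x}) x := by
    constructor
    · simp
    · intro z hz hxz
      by_contra hne
      exact hz ⟨F.2 hxz hx.1, by simpa using hne⟩
  have h1 : η b ⟨F.1 \ {x}, upper_erase F.2 hx⟩ = 1 :=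
    hmax b _ ⟨x, hmaxc, hκ⟩
  have h2 := hη b F x hx
  rw [h1, hκ] at h2
  simp [theta] at h2
  linear_combination -h2



end ColoredPosets
end

section
/- Let P be a locally finite poset colored by a finite simple graph Γ, and suppose there exists an edge weight function {η_a} such that η_b(F,I) = +1 whenever b is the color of a maximal element of the ideal I. Then P satisfies EC and AC: any two elements of P whose colors are equal or adjacent in Γ are comparable. -/
open Finsupp

section ColoredPosets

open scoped Classical

variable {P : Type*} {Γ : Type*} [PartialOrder P]

/-- Existence of an edge weight function with the `+1` property
forces EC and AC. -/
theorem stmt14 [LocallyFiniteOrder P] [Fintype Γ] (G : SimpleGraph Γ)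
    (κ : P → Γ) (hsurj : Function.Surjective κ)
    (hex : ∃ η : Γ → Split P → ℂ, IsEdgeWeight G κ η ∧
      ∀ (b : Γ) (F : Split P), (∃ y : P, MaxInCompl F.1 y ∧ κ y = b) → η b F = 1) :
    ∀ x y : P, (κ x = κ y ∨ G.Adj (κ x) (κ y)) → x ≤ y ∨ y ≤ x := by
  intro x y hadj
  by_contra hcomp
  push_neg at hcomp
  obtain ⟨hxy, hyx⟩ := hcomp
  obtain ⟨η, hη, hone⟩ := hex
  have hne : x ≠ y := fun h => hxy (h ▸ le_refl x)
  set F0 : Set P := {z | x ≤ z ∨ y ≤ z} with hF0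
  have hFup : IsUpperSet F0 := by
    intro u v huv hu
    rcases hu with h | h
    · exact Or.inl (h.trans huv)
    · exact Or.inr (h.trans huv)
  have hxmin : MinIn F0 x := by
    refine ⟨Or.inl le_rfl, fun z hz hzx => ?_⟩
    rcases hz with h | h
    · exact le_antisymm hzx h
    · exact absurd (h.trans hzx) hyx
  set F : Split P := ⟨F0, hFup⟩ with hF
  set F1 : Split P := ⟨F0 \ {x}, upper_erase hFup hxmin⟩ with hF1
  have hymin : MinIn F1.1 y := by
    refine ⟨⟨Or.inr le_rfl, fun h => hne (Set.mem_singleton_iff.mp h).symm⟩,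
      fun z hz hzy => ?_⟩
    rcases hz.1 with h | h
    · exact absurd (h.trans hzy) hxy
    · exact le_antisymm hzy h
  set F2 : Split P := ⟨F1.1 \ {y}, upper_erase F1.2 hymin⟩ with hF2
  have hxmax1 : MaxInCompl F1.1 x := by
    refine ⟨fun h => h.2 rfl, fun z hz hxz => ?_⟩
    by_contra hzx
    exact hz ⟨Or.inl hxz, fun h => hzx (Set.mem_singleton_iff.mp h)⟩
  have hxmax2 : MaxInCompl F2.1 x := by
    refine ⟨fun h => h.1.2 rfl, fun z hz hxz => ?_⟩
    by_contra hzx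
    have hzy : z ≠ y := fun h => hxy (h ▸ hxz)
    exact hz ⟨⟨Or.inl hxz, fun h => hzx (Set.mem_singleton_iff.mp h)⟩,
      fun h => hzy (Set.mem_singleton_iff.mp h)⟩
  have hymax2 : MaxInCompl F2.1 y := by
    refine ⟨fun h => h.2 rfl, fun z hz hyz => ?_⟩
    by_contra hzy
    have hzx : z ≠ x := fun h => hyx (h ▸ hyz)
    exact hz ⟨⟨Or.inr hyz, fun h => hzx (Set.mem_singleton_iff.mp h)⟩,
      fun h => hzy (Set.mem_singleton_iff.mp h)⟩
  rcases hadj with heq | hadjxy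
  · -- equal colors: use b = κ y
    have e2 := hη (κ y) F1 y hymin
    have h1 : η (κ y) F1 = 1 := hone (κ y) F1 ⟨x, hxmax1, heq⟩
    have h2 : η (κ y) F2 = 1 := hone (κ y) F2 ⟨y, hymax2, rfl⟩
    rw [show (⟨F1.1 \ {y}, upper_erase F1.2 hymin⟩ : Split P) = F2 from rfl,
      h1, h2] at e2
    simp only [theta, if_pos rfl] at e2
    norm_num at e2
  · -- adjacent colors: use b = κ x
    have e2 := hη (κ x) F1 y hymin
    have h1 : η (κ x) F1 = 1 := hone (κ x) F1 ⟨x, hxmax1, rfl⟩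
    have h2 : η (κ x) F2 = 1 := hone (κ x) F2 ⟨x, hxmax2, rfl⟩
    have hnecol : κ y ≠ κ x := fun h => hadjxy.ne (h.symm)
    rw [show (⟨F1.1 \ {y}, upper_erase F1.2 hymin⟩ : Split P) = F2 from rfl,
      h1, h2] at e2
    simp only [theta, if_neg hnecol, if_pos hadjxy.symm] at e2
    norm_num at e2


end ColoredPosets
end

section
/- Let P be a locally finite poset colored by a finite simple graph Γ satisfying EC and AC, and suppose x < y are consecutive occurrences of a color b (i.e., κ(x) = κ(y) = b and no element of color b lies strictly between them). If there exists an edge weight function {η_a} with η_b(F,I) = +1 whenever b is the color of a maximal element of I, then the open interval (x,y) contains exactly two elements whose colors are adjacent to b (i.e., I2A holds at this pair). -/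
open Finsupp

section ColoredPosets

open scoped Classical

variable {P : Type*} {Γ : Type*} [PartialOrder P]

/-!
Let `b = κ x = κ y`. Moving the elements of `(x, y]` one minimal element at a time from the filter
to the ideal turns the split with ideal `↓y \ (x, y]` into the split with ideal `↓y`, so the edge
weight condition telescopes: the difference of `η_b` at these splits is `∑_{t ∈ (x, y]} θ(κ t, b)`.
Both ideals have a maximal element of color `b` (namely `x` and `y`), so `η_b = 1` at both and the
sum vanishes. In it `y` contributes `2`, and every `t ∈ (x, y)` contributes `-1` or `0` according
as `κ t` is adjacent to `b` or not, since no such `t` has color `b`.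
-/

theorem minIn_of_minimal_diff {F F' : Set P} (hF' : IsUpperSet F') {t : P}
    (ht : Minimal (· ∈ F \ F') t) : MinIn F t :=
  ⟨ht.prop.1, fun _ hs hst => ht.eq_of_le ⟨hs, fun hs' => ht.prop.2 (hF' hst hs')⟩ hst⟩

theorem maxInCompl_compl_of_maximal {I : Set P} {w : P} (hw : Maximal (· ∈ I) w) :
    MaxInCompl Iᶜ w :=
  ⟨not_not.2 hw.prop, fun _ hz hwz => hw.eq_of_ge (not_not.1 hz) hwz⟩

theorem theta_self (G : SimpleGraph Γ) (a : Γ) : theta G a a = 2 := if_pos rfl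

theorem theta_of_ne (G : SimpleGraph Γ) {a b : Γ} (h : a ≠ b) :
    theta G a b = if G.Adj a b then -1 else 0 := if_neg h

theorem sum_theta_of_forall_ne {α : Type*} (G : SimpleGraph Γ) (κ : α → Γ) {s : Finset α}
    {b : Γ} (hs : ∀ t ∈ s, κ t ≠ b) :
    ∑ t ∈ s, theta G (κ t) b = -((s.filter fun t => G.Adj (κ t) b).card : ℤ) := by
  rw [Finset.sum_congr rfl fun t ht => theta_of_ne G (hs t ht), Finset.sum_ite,
    Finset.sum_const_zero, Finset.sum_const, nsmul_eq_mul, mul_neg_one, add_zero]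

theorem IsEdgeWeight.sub_eq_sum_theta {G : SimpleGraph Γ} {κ : P → Γ} {η : Γ → Split P → ℂ}
    (hη : IsEdgeWeight G κ η) (b : Γ) (D : Finset P) :
    ∀ {F F' : Split P}, F'.1 ⊆ F.1 → F.1 \ F'.1 = D →
      η b F' - η b F = ((∑ t ∈ D, theta G (κ t) b : ℤ) : ℂ) := by
  induction D using Finset.strongInduction with
  | H D ih =>
    intro F F' hsub hdiff
    rcases D.eq_empty_or_nonempty with rfl | hne
    · have : F = F' := Subtype.ext <| (Set.sdiff_eq_empty.1 (by simpa using hdiff)).antisymm hsub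
      simp [this]
    obtain ⟨t, htD⟩ := D.exists_minimal hne
    have ht : Minimal (· ∈ F.1 \ F'.1) t := by simpa only [hdiff, Finset.mem_coe] using htD
    have htF : MinIn F.1 t := minIn_of_minimal_diff F'.2 ht
    have hsub₁ : F'.1 ⊆ F.1 \ {t} := fun w hw => ⟨hsub hw, by rintro rfl; exact ht.prop.2 hw⟩
    have hdiff₁ : (F.1 \ {t}) \ F'.1 = ↑(D.erase t) := by
      rw [Set.sdiff_sdiff_comm, hdiff, Finset.coe_erase]
    have hrest := ih (D.erase t) (Finset.erase_ssubset htD.prop)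
      (F := ⟨F.1 \ {t}, upper_erase F.2 htF⟩) hsub₁ hdiff₁
    rw [← Finset.add_sum_erase D _ htD.prop, Int.cast_add, ← hrest, ← hη b F t htF]
    ring

theorem IsEdgeWeight.sum_theta_Ioc_eq_zero [LocallyFiniteOrder P] {G : SimpleGraph Γ}
    {κ : P → Γ} {η : Γ → Split P → ℂ} (hη : IsEdgeWeight G κ η) {b : Γ}
    (hη_one : ∀ F : Split P, (∃ w : P, MaxInCompl F.1 w ∧ κ w = b) → η b F = 1)
    {x y : P} (hxy : x ≤ y) (hx : κ x = b) (hy : κ y = b) :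
    ∑ t ∈ Finset.Ioc x y, theta G (κ t) b = 0 := by
  let Fx : Split P :=
    ⟨(Set.Iic y \ Set.Ioi x)ᶜ, ((isLowerSet_Iic y).inter (isUpperSet_Ioi x).compl).compl⟩
  let Fy : Split P := ⟨(Set.Iic y)ᶜ, (isLowerSet_Iic y).compl⟩
  have hdiff : Fx.1 \ Fy.1 = ↑(Finset.Ioc x y) := by
    ext w
    simp only [Fx, Fy, Set.mem_sdiff, Set.mem_compl_iff, Set.mem_Iic, Set.mem_Ioi,
      Finset.coe_Ioc, Set.mem_Ioc]
    tauto
  have key := hη.sub_eq_sum_theta b _ (Set.compl_subset_compl.2 Set.sdiff_subset) hdiff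
  have hFx : Maximal (· ∈ Set.Iic y \ Set.Ioi x) x :=
    ⟨⟨hxy, lt_irrefl x⟩, fun _ hz hxz => (eq_of_le_of_not_lt hxz hz.2).ge⟩
  have hFy : Maximal (· ∈ Set.Iic y) y := ⟨le_rfl, fun _ hz _ => hz⟩
  rw [hη_one Fy ⟨y, maxInCompl_compl_of_maximal hFy, hy⟩,
    hη_one Fx ⟨x, maxInCompl_compl_of_maximal hFx, hx⟩, sub_self] at key
  exact_mod_cast key.symm

theorem stmt15_general [LocallyFiniteOrder P] (G : SimpleGraph Γ)
    (κ : P → Γ)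
    (x y : P) (hxy : x < y) (hcol : κ x = κ y)
    (hcons : ∀ z ∈ Set.Ioo x y, κ z ≠ κ x)
    (hex : ∃ η : Γ → Split P → ℂ, IsEdgeWeight G κ η ∧
      ∀ (b : Γ) (F : Split P), (∃ w : P, MaxInCompl F.1 w ∧ κ w = b) → η b F = 1) :
    Nat.card {z : P // z ∈ Set.Ioo x y ∧ G.Adj (κ z) (κ x)} = 2 := by
  obtain ⟨η, hη, hη_one⟩ := hex
  have hsum := hη.sum_theta_Ioc_eq_zero (hη_one (κ x)) hxy.le rfl hcol.symm
  rw [← Finset.Ioo_insert_right hxy, Finset.sum_insert Finset.right_notMem_Ioo, hcol,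
    theta_self, ← hcol, sum_theta_of_forall_ne G κ fun z hz => hcons z (by simpa using hz)]
    at hsum
  have hcard : Nat.card {z : P // z ∈ Set.Ioo x y ∧ G.Adj (κ z) (κ x)} =
      ((Finset.Ioo x y).filter fun z => G.Adj (κ z) (κ x)).card := by
    rw [← Nat.card_eq_finsetCard]
    exact Nat.card_congr (Equiv.subtypeEquivRight fun z => by simp)
  omega

/-- Under EC and AC, if an edge weight function with the `+1`
property exists, then between consecutive occurrences of a color there are
exactly two elements of adjacent color. -/
theorem stmt15 [LocallyFiniteOrder P] [Fintype Γ] (G : SimpleGraph Γ)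
    (κ : P → Γ) (hsurj : Function.Surjective κ)
    (hEC : ∀ x y : P, κ x = κ y → x ≤ y ∨ y ≤ x)
    (hAC : ∀ x y : P, G.Adj (κ x) (κ y) → x ≤ y ∨ y ≤ x)
    (x y : P) (hxy : x < y) (hcol : κ x = κ y)
    (hcons : ∀ z ∈ Set.Ioo x y, κ z ≠ κ x)
    (hex : ∃ η : Γ → Split P → ℂ, IsEdgeWeight G κ η ∧
      ∀ (b : Γ) (F : Split P), (∃ w : P, MaxInCompl F.1 w ∧ κ w = b) → η b F = 1) :
    Nat.card {z : P // z ∈ Set.Ioo x y ∧ G.Adj (κ z) (κ x)} = 2 :=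
  stmt15_general G κ x y hxy hcol hcons hex

end ColoredPosets
end

section
/- Let P be a locally finite poset colored by a finite simple graph Γ satisfying EC and ND. If a split (F,I) has a maximal element y of I with color b, then I has no other maximal element of color b and F has no minimal element of color b; consequently Y_b X_b.⟨F,I⟩ = 0 and X_b Y_b.⟨F,I⟩ = ⟨F,I⟩. -/
open Finsupp

section ColoredPosets

open scoped Classical

variable {P : Type*} {Γ : Type*} [PartialOrder P]

/-- Under EC and ND, if the ideal of a split has a maximal element
`y` of color `b`, then it is the unique such element, the filter has no minimal
element of color `b`, and `Y_b X_b ⟨F,I⟩ = 0` while `X_b Y_b ⟨F,I⟩ = ⟨F,I⟩`. -/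
theorem stmt17 [LocallyFiniteOrder P] [Fintype Γ] (G : SimpleGraph Γ)
    (κ : P → Γ) (hsurj : Function.Surjective κ)
    (hEC : ∀ x y : P, κ x = κ y → x ≤ y ∨ y ≤ x)
    (hND : ∀ x y : P, x ⋖ y → κ x ≠ κ y)
    (F : Split P) (b : Γ) (y : P) (hy : MaxInCompl F.1 y) (hyb : κ y = b) :
    (∀ y' : P, MaxInCompl F.1 y' → κ y' = b → y' = y) ∧
    (¬ ∃ x : P, MinIn F.1 x ∧ κ x = b) ∧
    Yop κ b (Xop κ b (Finsupp.single F (1 : ℂ))) = 0 ∧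
    Xop κ b (Yop κ b (Finsupp.single F (1 : ℂ))) = Finsupp.single F (1 : ℂ) := by
  have h1 : ∀ y' : P, MaxInCompl F.1 y' → κ y' = b → y' = y := by
    intro y' hy' hy'b
    rcases hEC y y' (by rw [hyb, hy'b]) with h | h
    · exact hy.2 y' hy'.1 h
    · exact (hy'.2 y hy.1 h).symm
  have h2 : ¬ ∃ x : P, MinIn F.1 x ∧ κ x = b := by
    rintro ⟨x, hx, hxb⟩
    have hyx : y ≤ x := by
      rcases hEC x y (hxb.trans hyb.symm) with h | h
      · exact absurd (F.2 h hx.1) hy.1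
      · exact h
    have hcov : y ⋖ x := by
      refine ⟨lt_of_le_of_ne hyx (fun h => hy.1 (h ▸ hx.1)), ?_⟩
      intro z hz1 hz2
      by_cases hzF : z ∈ F.1
      · exact absurd (hx.2 z hzF hz2.le) (ne_of_lt hz2)
      · exact absurd (hy.2 z hzF hz1.le) (ne_of_gt hz1)
    exact hND y x hcov (hyb.trans hxb.symm)
  have hXF0 : XF κ b F = 0 := by
    rw [XF]
    apply finsum_eq_zero_of_forall_eq_zero
    intro x
    rw [dif_neg]
    rintro ⟨hx, hxb⟩
    exact h2 ⟨x, hx, hxb⟩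
  set F' : Split P := ⟨insert y F.1, upper_insert F.2 hy⟩ with hF'
  have hYF : YF κ b F = Finsupp.single F' 1 := by
    rw [YF, finsum_eq_single _ y]
    · rw [dif_pos ⟨hy, hyb⟩]
    · intro y' hy'
      rw [dif_neg]
      rintro ⟨h, hb⟩
      exact hy' (h1 y' h hb)
  have hymin : MinIn F'.1 y := by
    refine ⟨Set.mem_insert _ _, fun z hz hzy => ?_⟩
    rcases hz with rfl | hz
    · rfl
    · exact absurd (F.2 hzy hz) hy.1
  have huniq : ∀ x : P, MinIn F'.1 x → κ x = b → x = y := by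
    intro x hx hxb
    by_contra hne
    have hxF : x ∈ F.1 := by
      rcases hx.1 with rfl | h
      · exact absurd rfl hne
      · exact h
    rcases hEC x y (hxb.trans hyb.symm) with h | h
    · exact hy.1 (F.2 h hxF)
    · exact hne ((hx.2 y (Set.mem_insert _ _) h).symm)
  have hXF' : XF κ b F' = Finsupp.single F 1 := by
    rw [XF, finsum_eq_single _ y]
    · rw [dif_pos ⟨hymin, hyb⟩]
      congr 1
      exact Subtype.ext (Set.insert_diff_self_of_notMem hy.1)
    · intro x hx
      rw [dif_neg]
      rintro ⟨h, hb⟩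
      exact hx (huniq x h hb)
  refine ⟨h1, h2, ?_, ?_⟩
  · rw [Xop, Finsupp.linearCombination_single, one_smul, hXF0, map_zero]
  · rw [Yop, Finsupp.linearCombination_single, one_smul, hYF, Xop,
      Finsupp.linearCombination_single, one_smul, hXF']


end ColoredPosets
end
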